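/- arXiv:2307.05975 — 6 statements merged into one kernel-verified Lean document; each statement's English description precedes it below -/
import Mathlib

section
/- Let n ≥ 1, let a ∈ ℝ^n with a ≠ 0, and let c ∈ ℝ. Define Y_c = {(x, z, t) ∈ ℝ^n × ℝ × ℝ : z ∈ {0,1} and t ≥ (c − aᵀx)²(1 − z)}. Then the closure of the convex hull of Y_c equals ℝ^n × [0,1] × [0, ∞). In other words, any closed convex relaxation of Y_c is trivial. -/
open Matrix Set

/-!
Whenever the loss `f` vanishes somewhere, say at `x₀`, every point `(x, z, t)` with `0 < z ≤ 1`
and `t ≥ 0` is the convex combination `(1 - z) • (x₀, 0, t) + z • (x₁, 1, t)` of two points of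
the epigraph, where `x₁ = z⁻¹ • (x - (1 - z) • x₀)`: the point `(x₀, 0, t)` costs `f x₀ = 0`, and a
discarded point `(x₁, 1, t)` costs nothing. Taking the closure adds the face `z = 0`.
For the squared residual `(c - aᵀx)²` such an `x₀` exists as soon as `a ≠ 0`.
-/

def mixedIntegerEpigraph {E : Type*} (f : E → ℝ) : Set (E × ℝ × ℝ) :=
  {p | (p.2.1 = 0 ∨ p.2.1 = 1) ∧ f p.1 * (1 - p.2.1) ≤ p.2.2}

section MixedIntegerEpigraph

variable {E : Type*} {f : E → ℝ}

theorem mixedIntegerEpigraph_subset (hf : ∀ x, 0 ≤ f x) :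
    mixedIntegerEpigraph f ⊆ univ ×ˢ Icc (0 : ℝ) 1 ×ˢ Ici (0 : ℝ) := by
  rintro ⟨x, z, t⟩ ⟨hz | hz, ht⟩ <;> subst hz
  · exact ⟨trivial, ⟨le_rfl, zero_le_one⟩, by simpa using (hf x).trans (by simpa using ht)⟩
  · exact ⟨trivial, ⟨zero_le_one, le_rfl⟩, by simpa using ht⟩

variable [AddCommGroup E] [Module ℝ E]

theorem mem_convexHull_mixedIntegerEpigraph {x₀ : E} (hx₀ : f x₀ = 0) {x : E} {z t : ℝ}
    (hz : z ∈ Ioc (0 : ℝ) 1) (ht : 0 ≤ t) : (x, z, t) ∈ convexHull ℝ (mixedIntegerEpigraph f) := by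
  obtain ⟨hz0, hz1⟩ := hz
  set x₁ := z⁻¹ • (x - (1 - z) • x₀)
  have hkept : (x₀, (0 : ℝ), t) ∈ mixedIntegerEpigraph f := ⟨Or.inl rfl, by simpa [hx₀] using ht⟩
  have hdiscarded : (x₁, (1 : ℝ), t) ∈ mixedIntegerEpigraph f := ⟨Or.inr rfl, by simpa using ht⟩
  have hcomb : (1 - z) • (x₀, (0 : ℝ), t) + z • (x₁, (1 : ℝ), t) = (x, z, t) := by
    have hx : (1 - z) • x₀ + z • x₁ = x := by
      rw [smul_inv_smul₀ hz0.ne']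
      abel
    ext
    · simpa using hx
    · simp
    · simp only [Prod.snd_add, Prod.smul_snd, smul_eq_mul]
      ring
  rw [← hcomb]
  exact convex_convexHull ℝ _ (subset_convexHull ℝ _ hkept) (subset_convexHull ℝ _ hdiscarded)
    (sub_nonneg.2 hz1) hz0.le (sub_add_cancel 1 z)

variable [TopologicalSpace E]

theorem closure_convexHull_mixedIntegerEpigraph (hf : ∀ x, 0 ≤ f x) {x₀ : E} (hx₀ : f x₀ = 0) :
    closure (convexHull ℝ (mixedIntegerEpigraph f)) = univ ×ˢ Icc (0 : ℝ) 1 ×ˢ Ici (0 : ℝ) := by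
  apply Subset.antisymm
  · refine closure_minimal (convexHull_min (mixedIntegerEpigraph_subset hf) ?_) ?_
    · exact convex_univ.prod ((convex_Icc 0 1).prod (convex_Ici 0))
    · exact isClosed_univ.prod (isClosed_Icc.prod isClosed_Ici)
  · calc univ ×ˢ Icc (0 : ℝ) 1 ×ˢ Ici (0 : ℝ)
        = closure (univ ×ˢ Ioc (0 : ℝ) 1 ×ˢ Ici (0 : ℝ)) := by
          simp only [closure_prod_eq, closure_univ, closure_Ioc zero_ne_one, closure_Ici]
      _ ⊆ closure (convexHull ℝ (mixedIntegerEpigraph f)) := by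
          refine closure_mono ?_
          rintro ⟨x, z, t⟩ ⟨-, hz, ht⟩
          exact mem_convexHull_mixedIntegerEpigraph hx₀ hz ht

end MixedIntegerEpigraph

theorem exists_dotProduct_eq {n : ℕ} {a : Fin n → ℝ} (ha : a ≠ 0) (c : ℝ) :
    ∃ x, a ⬝ᵥ x = c := by
  obtain ⟨i, hi⟩ := Function.ne_iff.1 ha
  refine ⟨(c / a i) • Pi.single i 1, ?_⟩
  rw [dotProduct_smul, dotProduct_single, mul_one, smul_eq_mul, div_mul_cancel₀ c hi]

theorem trivial_closure_convexHull_general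
    (n : ℕ) (a : Fin n → ℝ) (ha : a ≠ 0) (c : ℝ) :
    closure (convexHull ℝ
      {p : (Fin n → ℝ) × ℝ × ℝ |
        (p.2.1 = 0 ∨ p.2.1 = 1) ∧ (c - a ⬝ᵥ p.1) ^ 2 * (1 - p.2.1) ≤ p.2.2}) =
    {p : (Fin n → ℝ) × ℝ × ℝ | p.2.1 ∈ Set.Icc (0 : ℝ) 1 ∧ 0 ≤ p.2.2} := by
  obtain ⟨x₀, hx₀⟩ := exists_dotProduct_eq ha c
  have hzero : (c - a ⬝ᵥ x₀) ^ 2 = 0 := by rw [hx₀, sub_self, sq, mul_zero]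
  refine (closure_convexHull_mixedIntegerEpigraph (f := fun x => (c - a ⬝ᵥ x) ^ 2)
    (fun x => sq_nonneg _) hzero).trans ?_
  ext
  simp

/-- Any closed convex relaxation of the mixed-integer epigraph
`Y_c = {(x,z,t) : z ∈ {0,1}, t ≥ (c - aᵀx)²(1-z)}` is trivial:
`cl conv (Y_c) = ℝⁿ × [0,1] × ℝ₊`. -/
theorem trivial_closure_convexHull
    (n : ℕ) (hn : 1 ≤ n) (a : Fin n → ℝ) (ha : a ≠ 0) (c : ℝ) :
    closure (convexHull ℝ
      {p : (Fin n → ℝ) × ℝ × ℝ |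
        (p.2.1 = 0 ∨ p.2.1 = 1) ∧ (c - a ⬝ᵥ p.1) ^ 2 * (1 - p.2.1) ≤ p.2.2}) =
    {p : (Fin n → ℝ) × ℝ × ℝ | p.2.1 ∈ Set.Icc (0 : ℝ) 1 ∧ 0 ≤ p.2.2} :=
  trivial_closure_convexHull_general n a ha c
end

section
/- Let Q ∈ ℝ^{n×n} be a symmetric positive definite matrix and a ∈ ℝ^n. Define Y_{0,Q} = {(x, z, t) ∈ ℝ^n × ℝ × ℝ : z ∈ {0,1} and t ≥ xᵀQx + (aᵀx)²(1 − z)}. Then the closure of the convex hull of Y_{0,Q} equals {(x, z, t) ∈ ℝ^n × [0,1] × ℝ : t ≥ xᵀQx + (1 − z)(aᵀx)² / (1 + z·aᵀQ⁻¹a)}. -/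
/-!
Write `α = aᵀQ⁻¹a`. For `a ≠ 0` the function bounding `t` on the right-hand side splits as
`xᵀQx - (aᵀx)²/α + ((1 + α)/α) · (aᵀx)²/(1 + zα)`: a quadratic form that is positive semidefinite
by the Cauchy–Schwarz inequality `(aᵀx)² ≤ α · xᵀQx`, plus a positive multiple of the perspective
`s²/u` composed with the affine map `(x, z) ↦ (aᵀx, 1 + zα)`. Hence it is convex and continuous on
`z ≥ 0`, and its epigraph over `z ∈ [0, 1]` is a closed convex set containing `Y_{0,Q}`.
Conversely, every point of that epigraph is the combination, with weights `1 - z` and `z`, of a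
point of `Y_{0,Q}` with `z = 0` and one with `z = 1`, whose `x`-parts are `x` moved along `Q⁻¹a`;
so the convex hull is already closed.
-/

open Matrix Set

theorem QuadraticMap.convexOn_univ_of_nonneg {E : Type*} [AddCommGroup E] [Module ℝ E]
    (q : QuadraticMap ℝ E ℝ) (hq : ∀ x, 0 ≤ q x) : ConvexOn ℝ univ q := by
  refine ⟨convex_univ, fun x _ y _ s t hs ht hst => ?_⟩
  have hcomb : q (s • x + t • y) = s ^ 2 * q x + t ^ 2 * q y + s * t * polar q x y := by
    have : q (s • x + t • y) = q (s • x) + q (t • y) + polar q (s • x) (t • y) := by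
      rw [polar]; ring
    rw [this, QuadraticMap.map_smul, QuadraticMap.map_smul, polar_smul_left, polar_smul_right]
    simp only [smul_eq_mul]; ring
  have hdiff : q (x - y) = q x + q y - polar q x y := by
    have h := polar_neg_right q x y
    simp only [polar, QuadraticMap.map_neg, ← sub_eq_add_neg] at h ⊢
    linarith
  obtain rfl : t = 1 - s := by linarith
  simp only [smul_eq_mul]
  nlinarith [mul_nonneg (mul_nonneg hs ht) (hq (x - y))]

theorem Matrix.convexOn_dotProduct_mulVec {ι : Type*} [Fintype ι] {M : Matrix ι ι ℝ}
    (hM : ∀ x, 0 ≤ x ⬝ᵥ M *ᵥ x) : ConvexOn ℝ univ fun x => x ⬝ᵥ M *ᵥ x := by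
  classical
  let q := LinearMap.BilinMap.toQuadraticMap (toBilin' M)
  have hq : ∀ x, q x = x ⬝ᵥ M *ᵥ x := fun x => toBilin'_apply' M x x
  exact (q.convexOn_univ_of_nonneg fun x => hq x ▸ hM x).congr fun x _ => hq x

theorem convexOn_sq_div : ConvexOn ℝ {p : ℝ × ℝ | 0 < p.2} fun p => p.1 ^ 2 / p.2 := by
  refine ⟨(convex_Ioi 0).linear_preimage (LinearMap.snd ℝ ℝ ℝ), ?_⟩
  rintro ⟨s₁, u₁⟩ (hu₁ : 0 < u₁) ⟨s₂, u₂⟩ (hu₂ : 0 < u₂) θ η hθ hη hθη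
  have hu : 0 < θ * u₁ + η * u₂ := by
    rcases hθ.eq_or_lt with rfl | hθ
    · simp_all
    · positivity
  simp only [Prod.smul_mk, Prod.mk_add_mk, smul_eq_mul]
  rw [mul_div_assoc', mul_div_assoc', div_add_div _ _ hu₁.ne' hu₂.ne',
    div_le_div_iff₀ hu (by positivity)]
  nlinarith [mul_nonneg (mul_nonneg hθ hη) (sq_nonneg (s₁ * u₂ - s₂ * u₁))]

namespace Matrix.PosDef

variable {ι : Type*} [Fintype ι] {Q : Matrix ι ι ℝ}

theorem dotProduct_mulVec_self_nonneg (hQ : Q.PosDef) (x : ι → ℝ) : 0 ≤ x ⬝ᵥ Q *ᵥ x := by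
  simpa using hQ.posSemidef.dotProduct_mulVec_nonneg x

variable [DecidableEq ι]

theorem mulVec_inv_mulVec (hQ : Q.PosDef) (a : ι → ℝ) : Q *ᵥ (Q⁻¹ *ᵥ a) = a := by
  rw [mulVec_mulVec, mul_nonsing_inv Q (isUnit_iff_ne_zero.mpr hQ.det_pos.ne'), one_mulVec]

theorem dotProduct_mulVec_add_smul_inv_mulVec (hQ : Q.PosDef) (a x : ι → ℝ) (c : ℝ) :
    (x + c • Q⁻¹ *ᵥ a) ⬝ᵥ Q *ᵥ (x + c • Q⁻¹ *ᵥ a) =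
      x ⬝ᵥ Q *ᵥ x + 2 * c * (a ⬝ᵥ x) + c ^ 2 * (a ⬝ᵥ Q⁻¹ *ᵥ a) := by
  have hsymm : (Q⁻¹ *ᵥ a) ⬝ᵥ Q *ᵥ x = a ⬝ᵥ x := by
    rw [dotProduct_mulVec, ← mulVec_transpose, (isHermitian_iff_isSymm.mp hQ.isHermitian).eq,
      hQ.mulVec_inv_mulVec]
  simp only [mulVec_add, mulVec_smul, hQ.mulVec_inv_mulVec, add_dotProduct, dotProduct_add,
    smul_dotProduct, dotProduct_smul, hsymm, smul_eq_mul]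
  rw [dotProduct_comm x a, dotProduct_comm (Q⁻¹ *ᵥ a) a]
  ring

theorem sq_dotProduct_le (hQ : Q.PosDef) (a v : ι → ℝ) :
    (a ⬝ᵥ v) ^ 2 ≤ (a ⬝ᵥ Q⁻¹ *ᵥ a) * (v ⬝ᵥ Q *ᵥ v) := by
  have h := discrim_le_zero (a := a ⬝ᵥ Q⁻¹ *ᵥ a) (b := 2 * (a ⬝ᵥ v)) (c := v ⬝ᵥ Q *ᵥ v)
    fun c => by
      have := hQ.dotProduct_mulVec_self_nonneg (v + c • Q⁻¹ *ᵥ a)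
      rw [hQ.dotProduct_mulVec_add_smul_inv_mulVec] at this
      linear_combination this
  rw [discrim] at h
  linarith

theorem convexOn_dotProduct_mulVec_sub_sq_div (hQ : Q.PosDef) (a : ι → ℝ) :
    ConvexOn ℝ univ fun x => x ⬝ᵥ Q *ᵥ x - (a ⬝ᵥ x) ^ 2 / (a ⬝ᵥ Q⁻¹ *ᵥ a) := by
  set α := a ⬝ᵥ Q⁻¹ *ᵥ a
  have hform : ∀ x, x ⬝ᵥ (Q - α⁻¹ • vecMulVec a a) *ᵥ x = x ⬝ᵥ Q *ᵥ x - (a ⬝ᵥ x) ^ 2 / α := by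
    intro x
    simp only [sub_mulVec, smul_mulVec, vecMulVec_mulVec, op_smul_eq_smul, dotProduct_sub,
      dotProduct_smul, smul_eq_mul, dotProduct_comm x a]
    ring
  refine (convexOn_dotProduct_mulVec fun x => ?_).congr fun x _ => hform x
  rw [hform, sub_nonneg]
  exact div_le_of_le_mul₀ (hQ.inv.dotProduct_mulVec_self_nonneg a)
    (hQ.dotProduct_mulVec_self_nonneg x) ((hQ.sq_dotProduct_le a x).trans_eq (mul_comm _ _))

end Matrix.PosDef

namespace SwitchedQuadratic

variable {ι : Type*} [Fintype ι]

def epigraph (Q : Matrix ι ι ℝ) (a : ι → ℝ) : Set ((ι → ℝ) × ℝ × ℝ) :=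
  {p | (p.2.1 = 0 ∨ p.2.1 = 1) ∧ p.1 ⬝ᵥ Q *ᵥ p.1 + (a ⬝ᵥ p.1) ^ 2 * (1 - p.2.1) ≤ p.2.2}

variable [DecidableEq ι]

noncomputable def envelope (Q : Matrix ι ι ℝ) (a : ι → ℝ) (p : (ι → ℝ) × ℝ) : ℝ :=
  p.1 ⬝ᵥ Q *ᵥ p.1 + (1 - p.2) * (a ⬝ᵥ p.1) ^ 2 / (1 + p.2 * (a ⬝ᵥ Q⁻¹ *ᵥ a))

def envelopeEpigraph (Q : Matrix ι ι ℝ) (a : ι → ℝ) : Set ((ι → ℝ) × ℝ × ℝ) :=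
  {p | p.2.1 ∈ Icc 0 1 ∧ envelope Q a (p.1, p.2.1) ≤ p.2.2}

variable {Q : Matrix ι ι ℝ}

theorem convexOn_envelope (hQ : Q.PosDef) (a : ι → ℝ) :
    ConvexOn ℝ {p | 0 ≤ p.2} (envelope Q a) := by
  have hdom : Convex ℝ {p : (ι → ℝ) × ℝ | 0 ≤ p.2} :=
    (convex_Ici 0).linear_preimage (LinearMap.snd ℝ _ ℝ)
  rcases eq_or_ne a 0 with rfl | ha
  · have hq := (convexOn_dotProduct_mulVec hQ.dotProduct_mulVec_self_nonneg).comp_linearMap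
      (LinearMap.fst ℝ (ι → ℝ) ℝ)
    exact (hq.subset (subset_univ _) hdom).congr fun p _ => by simp [envelope]
  set α := a ⬝ᵥ Q⁻¹ *ᵥ a with hα_def
  have hα : 0 < α := by simpa using hQ.inv.dotProduct_mulVec_pos ha
  have hg := hQ.convexOn_dotProduct_mulVec_sub_sq_div a
  let A : (ι → ℝ) × ℝ →ᵃ[ℝ] ℝ × ℝ :=
    ((dotProductBilin ℝ ℝ a).prodMap (α • LinearMap.id)).toAffineMap + AffineMap.const ℝ _ (0, 1)
  have hA : ∀ p, A p = (a ⬝ᵥ p.1, α * p.2 + 1) := fun p => by simp [A]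
  have hh := (convexOn_sq_div.comp_affineMap A).subset
    (fun p (hp : 0 ≤ p.2) => show 0 < (A p).2 by rw [hA]; positivity) hdom
  refine ((hg.comp_linearMap (LinearMap.fst ℝ _ ℝ)).subset (subset_univ _) hdom |>.add
    (hh.smul (c := (1 + α) / α) (by positivity))).congr fun p (hp : 0 ≤ p.2) => ?_
  simp only [Pi.add_apply, Function.comp_apply, LinearMap.coe_fst, hA, smul_eq_mul, envelope,
    ← hα_def]
  field_simp
  ring

theorem continuousOn_envelope (hQ : Q.PosDef) (a : ι → ℝ) :
    ContinuousOn (envelope Q a) {p | 0 ≤ p.2} := by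
  have hα := hQ.inv.dotProduct_mulVec_self_nonneg a
  refine Continuous.continuousOn (by fun_prop) |>.add <|
    (Continuous.continuousOn (by fun_prop)).div (Continuous.continuousOn (by fun_prop))
      fun p (hp : 0 ≤ p.2) => by positivity

theorem isClosed_envelopeEpigraph (hQ : Q.PosDef) (a : ι → ℝ) :
    IsClosed (envelopeEpigraph Q a) :=
  (isClosed_Icc.preimage (by fun_prop)).isClosed_le
    ((continuousOn_envelope hQ a).comp (by fun_prop) fun _ hp => hp.1) (by fun_prop)

theorem convex_envelopeEpigraph (hQ : Q.PosDef) (a : ι → ℝ) :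
    Convex ℝ (envelopeEpigraph Q a) :=
  ((convexOn_envelope hQ a).subset (fun _ hp => hp.1)
      ((convex_Icc 0 1).linear_preimage (LinearMap.snd ℝ _ ℝ))).convex_epigraph.linear_preimage
    (LinearEquiv.prodAssoc ℝ _ ℝ ℝ).symm.toLinearMap

theorem epigraph_subset_envelopeEpigraph (Q : Matrix ι ι ℝ) (a : ι → ℝ) :
    epigraph Q a ⊆ envelopeEpigraph Q a := by
  rintro ⟨x, z, t⟩ ⟨rfl | rfl, ht⟩ <;> refine ⟨by norm_num, ?_⟩ <;> simp_all [envelope]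

theorem envelopeEpigraph_subset_convexHull (hQ : Q.PosDef) (a : ι → ℝ) :
    envelopeEpigraph Q a ⊆ convexHull ℝ (epigraph Q a) := by
  rintro ⟨x, z, t⟩ ⟨⟨hz₀, hz₁⟩, ht⟩
  have hα := hQ.inv.dotProduct_mulVec_self_nonneg a
  have hD : 0 < 1 + z * (a ⬝ᵥ Q⁻¹ *ᵥ a) := by positivity
  have hlin : ∀ c : ℝ, a ⬝ᵥ (x + c • Q⁻¹ *ᵥ a) = a ⬝ᵥ x + c * (a ⬝ᵥ Q⁻¹ *ᵥ a) := fun c => by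
    rw [dotProduct_add, dotProduct_smul, smul_eq_mul]
  set s := t - envelope Q a (x, z) with hs
  -- `c₀, c₁` minimise the combined height `(1 - z) t₀ + z t₁` subject to `(1 - z) c₀ + z c₁ = 0`
  set c₀ := -(z * (a ⬝ᵥ x) / (1 + z * (a ⬝ᵥ Q⁻¹ *ᵥ a))) with hc₀
  set c₁ := (1 - z) * (a ⬝ᵥ x) / (1 + z * (a ⬝ᵥ Q⁻¹ *ᵥ a)) with hc₁
  have h₀ : (x + c₀ • Q⁻¹ *ᵥ a, 0, (x + c₀ • Q⁻¹ *ᵥ a) ⬝ᵥ Q *ᵥ (x + c₀ • Q⁻¹ *ᵥ a) +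
      (a ⬝ᵥ (x + c₀ • Q⁻¹ *ᵥ a)) ^ 2 + s) ∈ epigraph Q a :=
    ⟨Or.inl rfl, by simp only [sub_zero, mul_one]; linarith⟩
  have h₁ : (x + c₁ • Q⁻¹ *ᵥ a, 1,
      (x + c₁ • Q⁻¹ *ᵥ a) ⬝ᵥ Q *ᵥ (x + c₁ • Q⁻¹ *ᵥ a) + s) ∈ epigraph Q a :=
    ⟨Or.inr rfl, by simp only [sub_self, mul_zero, add_zero]; linarith⟩
  refine segment_subset_convexHull h₀ h₁ ⟨1 - z, z, by linarith, hz₀, by ring, ?_⟩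
  simp only [Prod.smul_mk, Prod.mk_add_mk, smul_eq_mul, Prod.mk.injEq]
  refine ⟨?_, by ring, ?_⟩
  · rw [hc₀, hc₁]
    module
  · rw [hQ.dotProduct_mulVec_add_smul_inv_mulVec, hQ.dotProduct_mulVec_add_smul_inv_mulVec, hlin,
      hs, envelope, hc₀, hc₁]
    field_simp
    ring

end SwitchedQuadratic

open SwitchedQuadratic

/-- Convex hull description of the homogeneous set
`Y_{0,Q} = {(x,z,t) : z ∈ {0,1}, t ≥ xᵀQx + (aᵀx)²(1-z)}`:
`cl conv (Y_{0,Q}) = {(x,z,t) : z ∈ [0,1], t ≥ xᵀQx + (1-z)(aᵀx)²/(1 + z·aᵀQ⁻¹a)}`. -/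
theorem closure_convexHull_homogeneous
    (n : ℕ) (Q : Matrix (Fin n) (Fin n) ℝ) (hQ : Q.PosDef) (a : Fin n → ℝ) :
    closure (convexHull ℝ
      {p : (Fin n → ℝ) × ℝ × ℝ |
        (p.2.1 = 0 ∨ p.2.1 = 1) ∧
          p.1 ⬝ᵥ Q.mulVec p.1 + (a ⬝ᵥ p.1) ^ 2 * (1 - p.2.1) ≤ p.2.2}) =
    {p : (Fin n → ℝ) × ℝ × ℝ |
      p.2.1 ∈ Set.Icc (0 : ℝ) 1 ∧
        p.1 ⬝ᵥ Q.mulVec p.1 +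
          (1 - p.2.1) * (a ⬝ᵥ p.1) ^ 2 / (1 + p.2.1 * (a ⬝ᵥ Q⁻¹.mulVec a)) ≤ p.2.2} := by
  change closure (convexHull ℝ (epigraph Q a)) = envelopeEpigraph Q a
  refine (closure_minimal ?_ (isClosed_envelopeEpigraph hQ a)).antisymm
    ((envelopeEpigraph_subset_convexHull hQ a).trans subset_closure)
  exact convexHull_min (epigraph_subset_envelopeEpigraph Q a) (convex_envelopeEpigraph hQ a)
end

section
/- Let A ∈ ℝ^{m×n} be a matrix none of whose rows is the zero vector, T ∈ ℝ^{n×n}, λ ≥ 0, and let c ∈ ℝ^m with c ≥ 0 componentwise (in the paper, c_i = w̄_i²(1/z̄_i − 1) for given w̄ ∈ ℝ^m and z̄ ∈ (0,1]^m). Set R = AᵀA + λTᵀT. Suppose u* ∈ ℝ^m is optimal for the problem: minimize Σ_{i=1}^m c_i/u_i subject to u_i ≥ 1 for all i and R − Aᵀ·Diag(u)·A ⪰ 0 (positive semidefinite). Define d* ∈ ℝ^m by d*_i = 1 − 1/u*_i. Then d* is optimal for the problem: maximize Σ_{i=1}^m c_i d_i subject to d ≥ 0 and the block matrix [[R, −Aᵀ],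 [−A, I − Diag(d)]] ⪰ 0. That is, d* is feasible for the second problem, and Σ_{i=1}^m c_i d*_i ≥ Σ_{i=1}^m c_i d_i for every d ∈ ℝ^m with d ≥ 0 and [[R, −Aᵀ], [−A, I − Diag(d)]] ⪰ 0. -/
/-!
The Schur complement with respect to the positive diagonal block `I - Diag(d)` turns the block
constraint into `R - Aᵀ Diag(1/(1 - d)) A ⪰ 0`, so `u = 1/(1 - d)` identifies the feasible sets of
the two problems, and under it `Σ cᵢdᵢ = Σ cᵢ - Σ cᵢ/uᵢ`. That every feasible `d` has `dᵢ < 1`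
comes from the rows of `A` being nonzero: a vanishing diagonal entry of a positive semidefinite
matrix forces its whole row to vanish.
-/

open Matrix

namespace Matrix

lemma one_sub_diagonal {ι α : Type*} [DecidableEq ι] [Ring α] (x : ι → α) :
    1 - diagonal x = diagonal (1 - x) := by
  rw [← diagonal_one', diagonal_sub]
  rfl

variable {ι κ : Type*} [Fintype ι] [Fintype κ]

lemma inv_diagonal_of_ne_zero [DecidableEq ι] {w : ι → ℝ} (hw : ∀ i, w i ≠ 0) :
    (diagonal w)⁻¹ = diagonal w⁻¹ :=
  inv_eq_left_inv <| by
    rw [diagonal_mul_diagonal, ← diagonal_one]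
    exact congrArg diagonal (funext fun i => inv_mul_cancel₀ (hw i))

lemma posSemidef_fromBlocks_neg_transpose_diagonal_iff [DecidableEq ι]
    (R : Matrix κ κ ℝ) (A : Matrix ι κ ℝ) {w : ι → ℝ} (hw : ∀ i, 0 < w i) :
    (fromBlocks R (-Aᵀ) (-A) (diagonal w)).PosSemidef ↔
      (R - Aᵀ * diagonal w⁻¹ * A).PosSemidef := by
  have hD : (diagonal w).PosDef := posDef_diagonal_iff.mpr hw
  have := hD.isUnit.invertible
  have hA : (-Aᵀ)ᴴ = -A := by
    rw [conjTranspose_neg, conjTranspose_eq_transpose_of_trivial, transpose_transpose]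
  rw [← hA, PosDef.fromBlocks₂₂ R (-Aᵀ) hD, hA, inv_diagonal_of_ne_zero fun i => (hw i).ne',
    Matrix.neg_mul, Matrix.neg_mul, Matrix.mul_neg, neg_neg]

lemma PosSemidef.apply_eq_zero_of_diag_eq_zero {M : Matrix ι ι ℝ} (hM : M.PosSemidef) {j : ι}
    (hj : M j j = 0) (i : ι) : M j i = 0 := by
  classical
  have hcol : M *ᵥ Pi.single j 1 = 0 :=
    (hM.dotProduct_mulVec_zero_iff _).mp (by simpa using hj)
  rw [← hM.isHermitian.apply j i]
  simpa using congrFun hcol i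

lemma PosSemidef.diagonal_pos_of_fromBlocks [DecidableEq ι] {R : Matrix κ κ ℝ}
    {B : Matrix κ ι ℝ} {C : Matrix ι κ ℝ} {w : ι → ℝ}
    (h : (fromBlocks R B C (diagonal w)).PosSemidef) {i : ι} (hC : C i ≠ 0) : 0 < w i := by
  have hw : 0 ≤ w i := by simpa using h.diag_nonneg (i := Sum.inr i)
  refine hw.lt_of_ne' fun hwi => hC (funext fun k => ?_)
  simpa using h.apply_eq_zero_of_diag_eq_zero (j := Sum.inr i) (by simpa using hwi) (Sum.inl k)

end Matrix

theorem sdp_reformulation_general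
    (m n : ℕ) (A : Matrix (Fin m) (Fin n) ℝ) (hA : ∀ i, A i ≠ 0)
    (T : Matrix (Fin n) (Fin n) ℝ) (lam : ℝ)
    (c : Fin m → ℝ)
    (u : Fin m → ℝ)
    (hu_feas : (∀ i, 1 ≤ u i) ∧
      (Aᵀ * A + lam • (Tᵀ * T) - Aᵀ * Matrix.diagonal u * A).PosSemidef)
    (hu_opt : ∀ v : Fin m → ℝ, (∀ i, 1 ≤ v i) →
      (Aᵀ * A + lam • (Tᵀ * T) - Aᵀ * Matrix.diagonal v * A).PosSemidef →
      ∑ i, c i / u i ≤ ∑ i, c i / v i)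
    (d : Fin m → ℝ) (hd : ∀ i, d i = 1 - 1 / u i) :
    ((∀ i, 0 ≤ d i) ∧
      (Matrix.fromBlocks (Aᵀ * A + lam • (Tᵀ * T)) (-Aᵀ) (-A)
        (1 - Matrix.diagonal d)).PosSemidef) ∧
    (∀ e : Fin m → ℝ, (∀ i, 0 ≤ e i) →
      (Matrix.fromBlocks (Aᵀ * A + lam • (Tᵀ * T)) (-Aᵀ) (-A)
        (1 - Matrix.diagonal e)).PosSemidef →
      ∑ i, c i * e i ≤ ∑ i, c i * d i) := by
  obtain ⟨hu_one, hu_psd⟩ := hu_feas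
  have hd_inv : 1 - d = u⁻¹ := funext fun i => by simp [hd i]
  refine ⟨⟨fun i => ?_, ?_⟩, fun e he he_psd => ?_⟩
  · rw [hd i, sub_nonneg, one_div]
    exact inv_le_one_of_one_le₀ (hu_one i)
  · rw [one_sub_diagonal, hd_inv, posSemidef_fromBlocks_neg_transpose_diagonal_iff (w := u⁻¹) _ _
      fun i => inv_pos.mpr (one_pos.trans_le (hu_one i)), inv_inv]
    exact hu_psd
  · rw [one_sub_diagonal] at he_psd
    have he_lt (i : Fin m) : 0 < 1 - e i :=
      he_psd.diagonal_pos_of_fromBlocks (neg_ne_zero.mpr (hA i))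
    have h_opt := hu_opt (1 - e)⁻¹ (fun i => one_le_inv₀ (he_lt i) |>.mpr (by simp [he i]))
      ((posSemidef_fromBlocks_neg_transpose_diagonal_iff _ _ he_lt).mp he_psd)
    simp only [Pi.inv_apply, Pi.sub_apply, Pi.one_apply, div_inv_eq_mul, mul_one_sub,
      Finset.sum_sub_distrib] at h_opt
    simp only [hd, mul_one_sub, mul_one_div, Finset.sum_sub_distrib]
    linarith

/-- Reformulation of the SDP `max Σ cᵢdᵢ s.t. d ≥ 0, [[R, -Aᵀ],[-A, I - Diag(d)]] ⪰ 0`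
via the lower-dimensional problem `min Σ cᵢ/uᵢ s.t. u ≥ 1, R - AᵀDiag(u)A ⪰ 0`:
if `u*` is optimal for the latter, then `d*ᵢ = 1 - 1/u*ᵢ` is optimal for the former. -/
theorem sdp_reformulation
    (m n : ℕ) (A : Matrix (Fin m) (Fin n) ℝ) (hA : ∀ i, A i ≠ 0)
    (T : Matrix (Fin n) (Fin n) ℝ) (lam : ℝ) (hlam : 0 ≤ lam)
    (c : Fin m → ℝ) (hc : ∀ i, 0 ≤ c i)
    (u : Fin m → ℝ)
    (hu_feas : (∀ i, 1 ≤ u i) ∧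
      (Aᵀ * A + lam • (Tᵀ * T) - Aᵀ * Matrix.diagonal u * A).PosSemidef)
    (hu_opt : ∀ v : Fin m → ℝ, (∀ i, 1 ≤ v i) →
      (Aᵀ * A + lam • (Tᵀ * T) - Aᵀ * Matrix.diagonal v * A).PosSemidef →
      ∑ i, c i / u i ≤ ∑ i, c i / v i)
    (d : Fin m → ℝ) (hd : ∀ i, d i = 1 - 1 / u i) :
    ((∀ i, 0 ≤ d i) ∧
      (Matrix.fromBlocks (Aᵀ * A + lam • (Tᵀ * T)) (-Aᵀ) (-A)
        (1 - Matrix.diagonal d)).PosSemidef) ∧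
    (∀ e : Fin m → ℝ, (∀ i, 0 ≤ e i) →
      (Matrix.fromBlocks (Aᵀ * A + lam • (Tᵀ * T)) (-Aᵀ) (-A)
        (1 - Matrix.diagonal e)).PosSemidef →
      ∑ i, c i * e i ≤ ∑ i, c i * d i) :=
  sdp_reformulation_general m n A hA T lam c u hu_feas hu_opt d hd
end

section
/- Let Q ∈ ℝ^{n×n} be symmetric positive definite and a ∈ ℝ^n, and set κ = aᵀQ⁻¹a. Let Q₁⁻¹ ∈ ℝ^{(n+1)×(n+1)} be the block matrix with blocks Q⁻¹, Q⁻¹a, aᵀQ⁻¹ and 1 + κ; let U ∈ ℝ^{(n+1)×(n+1)} be the block matrix with blocks (Q + aaᵀ)⁻¹, 0, 0 and 0; and let v ∈ ℝ^{n+1} be the vector whose first n coordinates are Q⁻¹a/√(1 + κ) and whose last coordinate is √(1 + κ). Then Q₁⁻¹ − U = vvᵀ. In particular, for every z ∈ ℝ, (1 − z)·U + z·Q₁⁻¹ = U + z·vvᵀ. -/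
/-!
By Sherman–Morrison, `(Q + aaᵀ)⁻¹ = Q⁻¹ - (1 + κ)⁻¹ Q⁻¹a aᵀQ⁻¹`, so the blocks of `Q₁⁻¹ - U` are
`(1 + κ)⁻¹ Q⁻¹a aᵀQ⁻¹`, `Q⁻¹a`, `aᵀQ⁻¹` and `1 + κ`. These are the blocks of `vvᵀ` for
`v = (Q⁻¹a / s; s)` as soon as `s² = 1 + κ`, and `1 + κ > 0` because `Q⁻¹` is positive definite.
The second identity is the first one rewritten along the line through `U` and `Q₁⁻¹`.
-/

open Matrix

namespace Matrix

theorem IsSymm.vecMul_eq_mulVec {n α : Type*} [Fintype n] [CommSemiring α] {M : Matrix n n α}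
    (hM : M.IsSymm) (a : n → α) : a ᵥ* M = M *ᵥ a := by
  rw [← vecMul_transpose, hM.eq]

variable {m n o K : Type*} [Fintype n] [DecidableEq n] [Field K]

theorem inv_add_vecMulVec {A : Matrix n n K} (hA : IsUnit A) {u v : n → K}
    (huv : 1 + v ⬝ᵥ A⁻¹ *ᵥ u ≠ 0) :
    (A + vecMulVec u v)⁻¹ =
      A⁻¹ - (1 + v ⬝ᵥ A⁻¹ *ᵥ u)⁻¹ • vecMulVec (A⁻¹ *ᵥ u) (v ᵥ* A⁻¹) := by
  have hAA : A * A⁻¹ = 1 := A.mul_nonsing_inv ((isUnit_iff_isUnit_det A).mp hA)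
  apply inv_eq_right_inv
  rw [add_mul, mul_sub, mul_sub, hAA, Matrix.mul_smul, Matrix.mul_smul, mul_vecMulVec,
    mulVec_mulVec, hAA, one_mulVec, vecMulVec_mul, vecMulVec_mul_vecMulVec, vecMulVec_smul]
  match_scalars
  · rfl
  · linear_combination -mul_inv_cancel₀ huv

theorem vecMulVec_sumElim_div_self (u : m → K) {s : K} (hs : s ≠ 0) :
    vecMulVec (Sum.elim (fun i => u i / s) fun _ : o => s)
        (Sum.elim (fun i => u i / s) fun _ : o => s) =
      fromBlocks ((s * s)⁻¹ • vecMulVec u u) (of fun i _ => u i) (of fun _ j => u j)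
        (of fun _ _ => s * s) := by
  ext (i | i) (j | j) <;> simp [vecMulVec_apply] <;> field_simp

end Matrix

theorem one_sub_smul_add_smul_eq_of_sub_eq {R M : Type*} [CommRing R] [AddCommGroup M]
    [Module R M] {x y w : M} (h : x - y = w) (z : R) : (1 - z) • y + z • x = y + z • w := by
  rw [← h]
  module

/-- With `κ = aᵀQ⁻¹a`, the difference between `Q₁⁻¹ = [[Q⁻¹, Q⁻¹a], [aᵀQ⁻¹, 1+κ]]`
and `U = [[(Q+aaᵀ)⁻¹, 0], [0, 0]]` is the rank-one matrix `vvᵀ`, where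
`v = (Q⁻¹a/√(1+κ); √(1+κ))`. In particular `(1-z)U + zQ₁⁻¹ = U + z vvᵀ`. -/
theorem Q1inv_decomposition
    (n : ℕ) (Q : Matrix (Fin n) (Fin n) ℝ) (hQ : Q.PosDef) (a : Fin n → ℝ) :
    (Matrix.fromBlocks Q⁻¹
        (Matrix.of fun i (_ : Unit) => Q⁻¹.mulVec a i)
        (Matrix.of fun (_ : Unit) j => Matrix.vecMul a Q⁻¹ j)
        (Matrix.of fun (_ : Unit) (_ : Unit) => 1 + a ⬝ᵥ Q⁻¹.mulVec a) -
      Matrix.fromBlocks (Q + vecMulVec a a)⁻¹ 0 0 0 =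
      vecMulVec
        (Sum.elim (fun i => Q⁻¹.mulVec a i / Real.sqrt (1 + a ⬝ᵥ Q⁻¹.mulVec a))
          fun _ : Unit => Real.sqrt (1 + a ⬝ᵥ Q⁻¹.mulVec a))
        (Sum.elim (fun i => Q⁻¹.mulVec a i / Real.sqrt (1 + a ⬝ᵥ Q⁻¹.mulVec a))
          fun _ : Unit => Real.sqrt (1 + a ⬝ᵥ Q⁻¹.mulVec a))) ∧
    ∀ z : ℝ,
      (1 - z) • Matrix.fromBlocks (Q + vecMulVec a a)⁻¹ 0 0 0 +
        z • Matrix.fromBlocks Q⁻¹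
          (Matrix.of fun i (_ : Unit) => Q⁻¹.mulVec a i)
          (Matrix.of fun (_ : Unit) j => Matrix.vecMul a Q⁻¹ j)
          (Matrix.of fun (_ : Unit) (_ : Unit) => 1 + a ⬝ᵥ Q⁻¹.mulVec a) =
      Matrix.fromBlocks (Q + vecMulVec a a)⁻¹ 0 0 0 +
        z • vecMulVec
          (Sum.elim (fun i => Q⁻¹.mulVec a i / Real.sqrt (1 + a ⬝ᵥ Q⁻¹.mulVec a))
            fun _ : Unit => Real.sqrt (1 + a ⬝ᵥ Q⁻¹.mulVec a))
          (Sum.elim (fun i => Q⁻¹.mulVec a i / Real.sqrt (1 + a ⬝ᵥ Q⁻¹.mulVec a))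
            fun _ : Unit => Real.sqrt (1 + a ⬝ᵥ Q⁻¹.mulVec a)) := by
  have hκ : 0 < 1 + a ⬝ᵥ Q⁻¹ *ᵥ a := by
    have hκ_nonneg := hQ.inv.posSemidef.dotProduct_mulVec_nonneg a
    rw [star_trivial] at hκ_nonneg
    linarith
  have hQ_symm : Q⁻¹.IsSymm := isHermitian_iff_isSymm.mp hQ.inv.isHermitian
  refine (and_iff_left_of_imp fun key => one_sub_smul_add_smul_eq_of_sub_eq key).2 ?_
  rw [vecMulVec_sumElim_div_self _ (Real.sqrt_pos.2 hκ).ne', Real.mul_self_sqrt hκ.le,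
    sub_eq_iff_eq_add', fromBlocks_add, inv_add_vecMulVec hQ.isUnit hκ.ne',
    hQ_symm.vecMul_eq_mulVec]
  simp
end

section
/- Let m > h ≥ 0 be integers, y ∈ ℝ^m, A ∈ ℝ^{m×n} (with rows a_i), T ∈ ℝ^{k×n}, λ ≥ 0, and let M ≥ (m/(m − h))·max_{i∈[m]} |y_i|. Consider the continuous relaxation of the big-M formulation: minimize Σ_{i=1}^m u_i² + λ‖Tx‖₂² over u ∈ ℝ^m with u ≥ 0, x ∈ ℝ^n, z ∈ [0,1]^m, subject to −y_i + a_iᵀx ≤ u_i + z_i M and y_i − a_iᵀx ≤ u_i + z_i M for all i ∈ [m], and Σ_{i=1}^m z_i ≤ m − h. Then the optimal value of this problem is 0, attained at u* = 0, x* = 0, z* = ((m − h)/m)·1, regardless of the data (A, y, T). -/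
open Matrix Finset

/-- The continuous relaxation of the big-M formulation of least trimmed squares has
optimal value `0`, attained at `u* = 0`, `x* = 0`, `z* = ((m-h)/m)·1`,
regardless of the data `(A, y, T)`. -/
theorem bigM_relaxation_trivial
    (m h n k : ℕ) (hh : h < m) (y : Fin m → ℝ) (A : Matrix (Fin m) (Fin n) ℝ)
    (T : Matrix (Fin k) (Fin n) ℝ) (lam : ℝ) (hlam : 0 ≤ lam) (M : ℝ)
    (hne : (Finset.univ : Finset (Fin m)).Nonempty)
    (hM : (m : ℝ) / ((m : ℝ) - (h : ℝ)) * (Finset.univ.sup' hne fun i => |y i|) ≤ M) :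
    -- the point (u*, x*, z*) = (0, 0, ((m-h)/m)·1) is feasible:
    ((∀ i : Fin m, (0 : ℝ) ≤ 0) ∧
      (∀ i : Fin m, ((m : ℝ) - (h : ℝ)) / (m : ℝ) ∈ Set.Icc (0 : ℝ) 1) ∧
      (∀ i : Fin m, -y i + A.mulVec (0 : Fin n → ℝ) i ≤ 0 + ((m : ℝ) - (h : ℝ)) / (m : ℝ) * M) ∧
      (∀ i : Fin m, y i - A.mulVec (0 : Fin n → ℝ) i ≤ 0 + ((m : ℝ) - (h : ℝ)) / (m : ℝ) * M) ∧
      (∑ _i : Fin m, ((m : ℝ) - (h : ℝ)) / (m : ℝ)) ≤ (m : ℝ) - (h : ℝ)) ∧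
    -- its objective value is 0:
    ((∑ _i : Fin m, ((0 : ℝ)) ^ 2) +
      lam * (T.mulVec (0 : Fin n → ℝ) ⬝ᵥ T.mulVec (0 : Fin n → ℝ)) = 0) ∧
    -- and every feasible point has objective value at least 0:
    (∀ (u : Fin m → ℝ) (x : Fin n → ℝ) (z : Fin m → ℝ),
      (∀ i, 0 ≤ u i) → (∀ i, z i ∈ Set.Icc (0 : ℝ) 1) →
      (∀ i, -y i + A.mulVec x i ≤ u i + z i * M) →
      (∀ i, y i - A.mulVec x i ≤ u i + z i * M) →
      (∑ i, z i) ≤ (m : ℝ) - (h : ℝ) →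
      0 ≤ (∑ i, u i ^ 2) + lam * (T.mulVec x ⬝ᵥ T.mulVec x)) := by

  have hm0 : (0:ℝ) < m := by exact_mod_cast Nat.pos_of_ne_zero (by omega)
  have hmh : (0:ℝ) < (m:ℝ) - (h:ℝ) := by
    have : (h:ℝ) < (m:ℝ) := by exact_mod_cast hh
    linarith
  have hS : ∀ i : Fin m, |y i| ≤ ((m:ℝ) - (h:ℝ)) / (m:ℝ) * M := by
    intro i
    have h1 : |y i| ≤ Finset.univ.sup' hne fun i => |y i| :=
      Finset.le_sup' (fun i => |y i|) (Finset.mem_univ i)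
    have h2 : (Finset.univ.sup' hne fun i => |y i|) ≤ ((m:ℝ) - (h:ℝ)) / (m:ℝ) * M := by
      rw [div_mul_eq_mul_div, le_div_iff₀ hm0]
      have := mul_le_mul_of_nonneg_left hM (le_of_lt hmh)
      calc (Finset.univ.sup' hne fun i => |y i|) * (m:ℝ)
          = ((m:ℝ) - (h:ℝ)) * ((m:ℝ) / ((m:ℝ) - (h:ℝ)) * (Finset.univ.sup' hne fun i => |y i|)) := by
            field_simp
        _ ≤ ((m:ℝ) - (h:ℝ)) * M := this
    linarith
  refine ⟨⟨fun i => le_refl 0, fun i => ⟨by positivity, by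
      rw [div_le_one hm0]; linarith⟩, fun i => ?_, fun i => ?_, ?_⟩, ?_, ?_⟩
  · have := hS i
    have := abs_le.mp this
    simp [Matrix.mulVec_zero]
    linarith [this.1, this.2]
  · have := abs_le.mp (hS i)
    simp [Matrix.mulVec_zero]
    linarith [this.1, this.2]
  · rw [Finset.sum_const, Finset.card_univ, Fintype.card_fin, nsmul_eq_mul]
    rw [mul_div_assoc']
    rw [div_le_iff₀ hm0] at *
    ring_nf
    nlinarith
  · simp [Matrix.mulVec_zero]
  · intro u x z hu hz h1 h2 h3
    have : 0 ≤ ∑ i, u i ^ 2 := Finset.sum_nonneg fun i _ => sq_nonneg _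
    have h4 : 0 ≤ T.mulVec x ⬝ᵥ T.mulVec x := by
      unfold dotProduct
      exact Finset.sum_nonneg fun i _ => mul_self_nonneg _
    positivity
end

section
/- Let Q ∈ ℝ^{n×n} be symmetric positive definite, a ∈ ℝ^n, c ∈ ℝ, x ∈ ℝ^n and w ∈ ℝ. Set κ = aᵀQ⁻¹a and γ = Q⁻¹a/(1 + κ). Then xᵀQx + (c + w − aᵀx)² = c² + 2c(w − aᵀx) + (x − w·γ)ᵀ(Q + aaᵀ)(x − w·γ) + w²/(1 + κ). -/
/-!
Put `M = Q + aaᵀ` and `γ = Q⁻¹a / (1 + κ)`. Since `Mγ = a`, expanding the quadratic form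
around `x` gives `(x - wγ)ᵀM(x - wγ) = xᵀQx + (aᵀx)² - 2w·aᵀx + w²κ/(1 + κ)`, and adding
`w²/(1 + κ)` completes the coefficient of `w²` to `1`; the rest is the expansion of the square.
Positive definiteness makes `Q` invertible and symmetric, and gives `κ ≥ 0`, so `1 + κ ≠ 0`.
-/

open Matrix

namespace Matrix

variable {ι R : Type*} [Fintype ι]

theorem vecMulVec_mulVec_eq_smul [CommSemiring R] (u v w : ι → R) :
    vecMulVec u v *ᵥ w = (v ⬝ᵥ w) • u := by
  rw [vecMulVec_mulVec, op_smul_eq_smul]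

theorem IsSymm.dotProduct_mulVec_sub_smul [CommRing R] {M : Matrix ι ι R} (hM : M.IsSymm)
    {γ b : ι → R} (hγ : M *ᵥ γ = b) (x : ι → R) (t : R) :
    (x - t • γ) ⬝ᵥ M *ᵥ (x - t • γ) = x ⬝ᵥ M *ᵥ x - 2 * t * (b ⬝ᵥ x) + t ^ 2 * (γ ⬝ᵥ b) := by
  have hγx : γ ⬝ᵥ M *ᵥ x = b ⬝ᵥ x := by
    rw [dotProduct_mulVec, ← mulVec_transpose, hM.eq, hγ]
  simp only [mulVec_sub, mulVec_smul, dotProduct_sub, sub_dotProduct, dotProduct_smul,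
    smul_dotProduct, smul_eq_mul, hγx, hγ]
  rw [dotProduct_comm x b]
  ring

theorem add_vecMulVec_self_mulVec_inv_mulVec [Field R] [DecidableEq ι] {Q : Matrix ι ι R}
    (hQ : IsUnit Q.det) (a : ι → R) (ha : 1 + a ⬝ᵥ Q⁻¹ *ᵥ a ≠ 0) :
    (Q + vecMulVec a a) *ᵥ ((1 / (1 + a ⬝ᵥ Q⁻¹ *ᵥ a)) • Q⁻¹ *ᵥ a) = a := by
  rw [mulVec_smul, add_mulVec, vecMulVec_mulVec_eq_smul, mulVec_mulVec, mul_nonsing_inv Q hQ,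
    one_mulVec]
  match_scalars
  field_simp

end Matrix

/-- Perspective decomposition identity: with `κ = aᵀQ⁻¹a` and `γ = Q⁻¹a/(1+κ)`,
`xᵀQx + (c + w - aᵀx)² = c² + 2c(w - aᵀx) + (x - wγ)ᵀ(Q + aaᵀ)(x - wγ) + w²/(1+κ)`. -/
theorem perspective_identity
    (n : ℕ) (Q : Matrix (Fin n) (Fin n) ℝ) (hQ : Q.PosDef) (a : Fin n → ℝ) (c : ℝ)
    (x : Fin n → ℝ) (w : ℝ) :
    x ⬝ᵥ Q.mulVec x + (c + w - a ⬝ᵥ x) ^ 2 =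
      c ^ 2 + 2 * c * (w - a ⬝ᵥ x) +
        (x - w • ((1 / (1 + a ⬝ᵥ Q⁻¹.mulVec a)) • Q⁻¹.mulVec a)) ⬝ᵥ
          (Q + vecMulVec a a).mulVec
            (x - w • ((1 / (1 + a ⬝ᵥ Q⁻¹.mulVec a)) • Q⁻¹.mulVec a)) +
        w ^ 2 / (1 + a ⬝ᵥ Q⁻¹.mulVec a) := by
  have hκ : 0 ≤ a ⬝ᵥ Q⁻¹ *ᵥ a := by
    simpa using hQ.inv.posSemidef.dotProduct_mulVec_nonneg a
  have hκ₁ : 1 + a ⬝ᵥ Q⁻¹ *ᵥ a ≠ 0 := by positivity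
  have hM : (Q + vecMulVec a a).IsSymm :=
    (isHermitian_iff_isSymm.mp hQ.isHermitian).add (by simp [IsSymm])
  rw [hM.dotProduct_mulVec_sub_smul
      (add_vecMulVec_self_mulVec_inv_mulVec (isUnit_iff_isUnit_det Q |>.mp hQ.isUnit) a hκ₁),
    add_mulVec, dotProduct_add, vecMulVec_mulVec_eq_smul, dotProduct_smul, smul_dotProduct,
    dotProduct_comm (Q⁻¹ *ᵥ a) a, dotProduct_comm x a, smul_eq_mul, smul_eq_mul]
  field_simp
  ring
end
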